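/- arXiv:1805.05109 — 2 statements merged into one kernel-verified Lean document; each statement's English description precedes it below -/
import Mathlib

section
/- For real (or complex) s with Re(s) > 1, the multiple zeta value ζ(2,2) := Σ_{m>n≥1} 1/(m² n²) equals (3/4)·ζ(4). -/
/-!
Squaring `ζ(2) = Σ 1/n²` gives a double sum over all pairs `(m, n)`. It splits into the two
strict triangles `n < m` and `m < n`, which have the same sum `ζ(2,2)` by symmetry, and the
diagonal, which sums to `ζ(4)`. Hence `2 ζ(2,2) = ζ(2)² - ζ(4) = π⁴/36 - π⁴/90 = (3/2) ζ(4)`.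
-/

open Real

theorem tsum_ite_eq_mul_eq_tsum_sq {R ι : Type*} [Semiring R] [TopologicalSpace R] [DecidableEq ι]
    (f : ι → R) : ∑' p : ι × ι, (if p.1 = p.2 then f p.1 * f p.2 else 0) = ∑' i, f i ^ 2 := by
  have hdiag : Function.Injective fun i : ι => (i, i) := fun i j h => congrArg Prod.fst h
  rw [← hdiag.tsum_eq]
  · simp [sq]
  · rintro ⟨i, j⟩ hij
    obtain rfl : i = j := by by_contra h; simp [h] at hij
    exact ⟨i, rfl⟩

section LowerTriangle

variable {R ι : Type*} [NormedCommRing R] [CompleteSpace R] [LinearOrder ι] {f : ι → R}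

theorem summable_ite_lt_mul_of_summable_norm (hf : Summable fun i => ‖f i‖) :
    Summable fun p : ι × ι => if p.2 < p.1 then f p.1 * f p.2 else 0 :=
  (summable_mul_of_summable_norm hf hf).summable_of_eq_zero_or_self fun p => by
    split_ifs <;> simp

theorem two_mul_tsum_ite_lt_mul_of_summable_norm (hf : Summable fun i => ‖f i‖) :
    2 * ∑' p : ι × ι, (if p.2 < p.1 then f p.1 * f p.2 else 0)
      = (∑' i, f i) ^ 2 - ∑' i, f i ^ 2 := by
  set lower : ι × ι → R := fun p => if p.2 < p.1 then f p.1 * f p.2 else 0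
  have hprod := summable_mul_of_summable_norm hf hf
  have hlower : Summable lower := summable_ite_lt_mul_of_summable_norm hf
  have hupper : Summable fun p : ι × ι => lower p.swap := hlower.comp_injective Prod.swap_injective
  have hdiag : Summable fun p : ι × ι => if p.1 = p.2 then f p.1 * f p.2 else 0 :=
    hprod.summable_of_eq_zero_or_self fun p => by split_ifs <;> simp
  have hsplit : ∀ p : ι × ι, f p.1 * f p.2
      = lower p + lower p.swap + (if p.1 = p.2 then f p.1 * f p.2 else 0) := by
    rintro ⟨i, j⟩
    rcases lt_trichotomy i j with h | rfl | h
    · simp [lower, h, h.ne, h.not_gt, mul_comm]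
    · simp [lower]
    · simp [lower, h, h.ne', h.not_gt]
  have hswap : ∑' p : ι × ι, lower p.swap = ∑' p, lower p := (Equiv.prodComm ι ι).tsum_eq lower
  calc 2 * ∑' p, lower p
      = ∑' p : ι × ι, f p.1 * f p.2 - ∑' i, f i ^ 2 := by
        rw [tsum_congr hsplit, (hlower.add hupper).tsum_add hdiag, hlower.tsum_add hupper,
          hswap, tsum_ite_eq_mul_eq_tsum_sq]
        ring
    _ = (∑' i, f i) ^ 2 - ∑' i, f i ^ 2 := by
        rw [sq, tsum_mul_tsum_of_summable_norm hf hf]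

end LowerTriangle

theorem tsum_one_div_nat_succ_pow_four :
    ∑' n : ℕ, (1 : ℝ) / ((n : ℝ) + 1) ^ 4 = π ^ 4 / 90 := by
  rw [← hasSum_zeta_four.tsum_eq, hasSum_zeta_four.summable.tsum_eq_zero_add]
  simp

/-- The double zeta value ζ(2,2) = Σ_{m>n≥1} 1/(m² n²) equals (3/4)·ζ(4). -/
theorem double_zeta_two_two :
    (∑' m : ℕ, ∑' n : ℕ, (if 1 ≤ n ∧ n < m then (1 : ℝ) / ((m : ℝ) ^ 2 * (n : ℝ) ^ 2) else 0))
      = (3 / 4) * ∑' n : ℕ, (1 : ℝ) / ((n : ℝ) + 1) ^ 4 := by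
  set f : ℕ → ℝ := fun n => 1 / (n : ℝ) ^ 2
  have hf : Summable fun n => ‖f n‖ := by simp [f]
  have hsq : ∑' n, f n ^ 2 = π ^ 4 / 90 := by
    rw [← hasSum_zeta_four.tsum_eq]
    congr 1 with n
    ring
  -- `f 0 = 0` by the convention `1 / 0 = 0`, so the condition `1 ≤ n` costs nothing.
  have hsummand : ∀ m n : ℕ,
      (if 1 ≤ n ∧ n < m then (1 : ℝ) / ((m : ℝ) ^ 2 * (n : ℝ) ^ 2) else 0)
        = if n < m then f m * f n else 0 := by
    intro m n
    rcases Nat.eq_zero_or_pos n with rfl | hn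
    · simp [f]
    · simp [f, Nat.one_le_iff_ne_zero.mpr hn.ne', one_div, mul_comm]
  have h2S := two_mul_tsum_ite_lt_mul_of_summable_norm hf
  rw [hasSum_zeta_two.tsum_eq, hsq] at h2S
  simp_rw [hsummand]
  rw [← (summable_ite_lt_mul_of_summable_norm hf).tsum_prod, tsum_one_div_nat_succ_pow_four]
  linear_combination h2S / 2
end

section
/- The double zeta value ζ(3,2) := Σ_{m>n≥1} 1/(m³ n²) equals 3·ζ(2)·ζ(3) − (11/2)·ζ(5). -/
open Filter Finset

namespace DoubleZeta

noncomputable def Z (s : ℕ) : ℝ := ∑' n : ℕ, 1 / ((n : ℝ) + 1) ^ s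

noncomputable def D (a b : ℕ) : ℝ :=
  ∑' p : ℕ × ℕ, 1 / (((p.1 : ℝ) + (p.2 : ℝ) + 2) ^ a * ((p.2 : ℝ) + 1) ^ b)

lemma summable_z {s : ℕ} (hs : 1 < s) :
    Summable (fun n : ℕ => 1 / ((n : ℝ) + 1) ^ s) := by
  have h := (Real.summable_one_div_nat_pow (p := s)).mpr hs
  have h2 := h.comp_injective (add_left_injective 1)
  refine h2.congr fun n => ?_
  simp only [Function.comp]
  push_cast
  ring_nf

lemma sq_summable :
    Summable (fun p : ℕ × ℕ => 1 / (((p.1 : ℝ) + 1) ^ 2 * ((p.2 : ℝ) + 1) ^ 2)) := by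
  have h := (summable_z (s := 2) one_lt_two).mul_of_nonneg (summable_z (s := 2) one_lt_two)
    (fun n => by positivity) (fun n => by positivity)
  refine h.congr fun p => ?_
  rw [div_mul_div_comm, one_mul]

lemma summable_dom {f : ℕ × ℕ → ℝ} (C : ℝ)
    (h0 : ∀ p, 0 ≤ f p)
    (h : ∀ p, f p ≤ C * (1 / (((p.1 : ℝ) + 1) ^ 2 * ((p.2 : ℝ) + 1) ^ 2))) :
    Summable f :=
  Summable.of_nonneg_of_le h0 h (sq_summable.mul_left C)


lemma tsum_split (f : ℕ × ℕ → ℝ) (hf : Summable f) :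
    ∑' p, f p = (∑' p : ℕ × ℕ, f (p.1 + p.2 + 1, p.2)) + (∑' p : ℕ × ℕ, f (p.2, p.1 + p.2 + 1))
      + ∑' c : ℕ, f (c, c) := by
  classical
  set s1 : Set (ℕ × ℕ) := {q | q.2 < q.1} with hs1
  set s2 : Set (ℕ × ℕ) := {q | q.1 < q.2} with hs2
  set s3 : Set (ℕ × ℕ) := {q | q.1 = q.2} with hs3
  have h1 : Summable (s1.indicator f) := hf.indicator s1
  have h2 : Summable (s2.indicator f) := hf.indicator s2
  have h3 : Summable (s3.indicator f) := hf.indicator s3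
  have hdecomp : ∀ q, f q = s1.indicator f q + s2.indicator f q + s3.indicator f q := by
    intro q
    rcases lt_trichotomy q.2 q.1 with h | h | h
    · rw [Set.indicator_of_mem (by exact h), Set.indicator_of_notMem (by simp [hs2]; omega),
        Set.indicator_of_notMem (by simp [hs3]; omega)]
      ring
    · rw [Set.indicator_of_notMem (by simp [hs1]; omega),
        Set.indicator_of_notMem (by simp [hs2]; omega),
        Set.indicator_of_mem (by simp [hs3]; omega)]
      ring
    · rw [Set.indicator_of_notMem (by simp [hs1]; omega),
        Set.indicator_of_mem (by exact h), Set.indicator_of_notMem (by simp [hs3]; omega)]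
      ring
  have e1 : ∑' p : ℕ × ℕ, f (p.1 + p.2 + 1, p.2) = ∑' q, s1.indicator f q := by
    have hinj : Function.Injective (fun p : ℕ × ℕ => ((p.1 + p.2 + 1, p.2) : ℕ × ℕ)) := by
      intro a b hab
      have h1 := congrArg Prod.fst hab
      have h2 := congrArg Prod.snd hab
      simp at h1 h2
      exact Prod.ext (by omega) h2
    have hsupp : Function.support (s1.indicator f) ⊆
        Set.range (fun p : ℕ × ℕ => ((p.1 + p.2 + 1, p.2) : ℕ × ℕ)) := by
      intro q hq
      have hq1 : q ∈ s1 := by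
        by_contra hmem
        simp [Function.mem_support, Set.indicator_of_notMem hmem] at hq
        exact hmem hq.1
      have hlt : q.2 < q.1 := hq1
      exact ⟨(q.1 - q.2 - 1, q.2), by simp; exact Prod.ext (by simp; omega) rfl⟩
    rw [← hinj.tsum_eq hsupp]
    refine tsum_congr fun p => ?_
    rw [Set.indicator_of_mem]
    show p.2 < p.1 + p.2 + 1
    omega
  have e2 : ∑' p : ℕ × ℕ, f (p.2, p.1 + p.2 + 1) = ∑' q, s2.indicator f q := by
    have hinj : Function.Injective (fun p : ℕ × ℕ => ((p.2, p.1 + p.2 + 1) : ℕ × ℕ)) := by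
      intro a b hab
      have h1 := congrArg Prod.fst hab
      have h2 := congrArg Prod.snd hab
      simp at h1 h2
      exact Prod.ext (by omega) h1
    have hsupp : Function.support (s2.indicator f) ⊆
        Set.range (fun p : ℕ × ℕ => ((p.2, p.1 + p.2 + 1) : ℕ × ℕ)) := by
      intro q hq
      have hq1 : q ∈ s2 := by
        by_contra hmem
        simp [Function.mem_support, Set.indicator_of_notMem hmem] at hq
        exact hmem hq.1
      have hlt : q.1 < q.2 := hq1
      exact ⟨(q.2 - q.1 - 1, q.1), by simp; exact Prod.ext rfl (by simp; omega)⟩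
    rw [← hinj.tsum_eq hsupp]
    refine tsum_congr fun p => ?_
    rw [Set.indicator_of_mem]
    show p.2 < p.1 + p.2 + 1
    omega
  have e3 : ∑' c : ℕ, f (c, c) = ∑' q, s3.indicator f q := by
    have hinj : Function.Injective (fun c : ℕ => ((c, c) : ℕ × ℕ)) := by
      intro a b hab
      simpa using congrArg Prod.fst hab
    have hsupp : Function.support (s3.indicator f) ⊆
        Set.range (fun c : ℕ => ((c, c) : ℕ × ℕ)) := by
      intro q hq
      have hq1 : q ∈ s3 := by
        by_contra hmem
        simp [Function.mem_support, Set.indicator_of_notMem hmem] at hq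
        exact hmem hq.1
      have heq : q.1 = q.2 := hq1
      exact ⟨q.1, by exact Prod.ext rfl heq⟩
    rw [← hinj.tsum_eq hsupp]
    refine tsum_congr fun c => ?_
    rw [Set.indicator_of_mem]
    show (c : ℕ) = c
    rfl
  rw [e1, e2, e3, ← Summable.tsum_add h1 h2, ← Summable.tsum_add (h1.add h2) h3]
  exact tsum_congr fun q => by rw [hdecomp q]


lemma hasSum_tele (c : ℕ) :
    HasSum (fun m : ℕ => 1 / ((m : ℝ) + 1) - 1 / ((m : ℝ) + (c : ℝ) + 1))
      (∑ k ∈ range c, 1 / ((k : ℝ) + 1)) := by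
  have hnn : ∀ m : ℕ, 0 ≤ 1 / ((m : ℝ) + 1) - 1 / ((m : ℝ) + (c : ℝ) + 1) := by
    intro m
    have h1 : (0:ℝ) < (m:ℝ) + 1 := by positivity
    have hc : (0:ℝ) ≤ (c:ℝ) := Nat.cast_nonneg c
    have h2 : (m:ℝ) + 1 ≤ (m:ℝ) + (c:ℝ) + 1 := by linarith
    have := one_div_le_one_div_of_le h1 h2
    linarith
  rw [hasSum_iff_tendsto_nat_of_nonneg hnn]
  have key : ∀ M : ℕ, ∑ m ∈ range M, (1 / ((m : ℝ) + 1) - 1 / ((m : ℝ) + (c : ℝ) + 1))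
      = (∑ k ∈ range c, 1 / ((k : ℝ) + 1)) - ∑ k ∈ range c, 1 / ((M : ℝ) + (k : ℝ) + 1) := by
    intro M
    induction M with
    | zero => simp
    | succ M ih =>
      rw [sum_range_succ, ih]
      have tel : ∑ k ∈ range c,
            (1 / ((M:ℝ) + (k:ℝ) + 1) - 1 / ((M:ℝ) + ((k:ℝ) + 1) + 1))
          = 1 / ((M:ℝ) + 1) - 1 / ((M:ℝ) + (c:ℝ) + 1) := by
        have h := Finset.sum_range_sub' (f := fun k : ℕ => 1 / ((M:ℝ) + (k:ℝ) + 1)) c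
        simp only [Nat.cast_add, Nat.cast_one] at h
        rw [h]
        norm_num
      have hsub : ∑ k ∈ range c, 1 / (((M:ℕ):ℝ) + (k:ℝ) + 1)
            - ∑ k ∈ range c, 1 / (((M+1:ℕ):ℝ) + (k:ℝ) + 1)
          = 1 / ((M:ℝ) + 1) - 1 / ((M:ℝ) + (c:ℝ) + 1) := by
        rw [← Finset.sum_sub_distrib, ← tel]
        refine Finset.sum_congr rfl fun k _ => ?_
        push_cast
        ring
      push_cast at hsub ⊢
      linarith
  simp only [key]
  have hz : Tendsto (fun M : ℕ => ∑ k ∈ range c, 1 / ((M : ℝ) + (k:ℝ) + 1)) atTop (nhds 0) := by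
    have h0 : (0:ℝ) = ∑ _k ∈ range c, (0:ℝ) := by simp
    rw [h0]
    refine tendsto_finset_sum _ fun k _ => ?_
    have hbase : Tendsto (fun x : ℝ => x⁻¹) atTop (nhds 0) := tendsto_inv_atTop_zero
    have hshift : Tendsto (fun M : ℕ => (M : ℝ) + ((k:ℝ) + 1)) atTop atTop :=
      tendsto_atTop_add_const_right atTop _ tendsto_natCast_atTop_atTop
    have := hbase.comp hshift
    refine this.congr fun M => ?_
    simp only [Function.comp]
    rw [one_div]
    ring_nf
  simpa using tendsto_const_nhds.sub hz


section Summabilities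

lemma summable_d23 :
    Summable (fun p : ℕ × ℕ => 1 / (((p.1:ℝ)+(p.2:ℝ)+2)^2 * ((p.2:ℝ)+1)^3)) := by
  refine summable_dom 1 (fun p => by positivity) (fun p => ?_)
  rw [one_mul]
  have hx : (0:ℝ) ≤ (p.1:ℝ) := Nat.cast_nonneg _
  have hy : (0:ℝ) ≤ (p.2:ℝ) := Nat.cast_nonneg _
  apply one_div_le_one_div_of_le (by positivity)
  nlinarith [mul_nonneg hx hy, mul_nonneg (mul_nonneg hx hy) hy,
    mul_nonneg (mul_nonneg hx hx) hy, mul_nonneg (mul_nonneg hy hy) hy,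
    mul_nonneg (mul_nonneg hx hx) hx]

lemma summable_d32 :
    Summable (fun p : ℕ × ℕ => 1 / (((p.1:ℝ)+(p.2:ℝ)+2)^3 * ((p.2:ℝ)+1)^2)) := by
  refine summable_dom 1 (fun p => by positivity) (fun p => ?_)
  rw [one_mul]
  have hx : (0:ℝ) ≤ (p.1:ℝ) := Nat.cast_nonneg _
  have hy : (0:ℝ) ≤ (p.2:ℝ) := Nat.cast_nonneg _
  apply one_div_le_one_div_of_le (by positivity)
  nlinarith [mul_nonneg hx hy, mul_nonneg (mul_nonneg hx hy) hy,
    mul_nonneg (mul_nonneg hx hx) hy, mul_nonneg (mul_nonneg hy hy) hy,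
    mul_nonneg (mul_nonneg hx hx) hx]

lemma summable_d41 :
    Summable (fun p : ℕ × ℕ => 1 / (((p.1:ℝ)+(p.2:ℝ)+2)^4 * ((p.2:ℝ)+1)^1)) := by
  refine summable_dom 1 (fun p => by positivity) (fun p => ?_)
  rw [one_mul]
  have hx : (0:ℝ) ≤ (p.1:ℝ) := Nat.cast_nonneg _
  have hy : (0:ℝ) ≤ (p.2:ℝ) := Nat.cast_nonneg _
  apply one_div_le_one_div_of_le (by positivity)
  nlinarith [mul_nonneg hx hy, mul_nonneg (mul_nonneg hx hy) hy,
    mul_nonneg (mul_nonneg hx hx) hy, mul_nonneg (mul_nonneg hy hy) hy,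
    mul_nonneg (mul_nonneg hx hx) hx, sq_nonneg ((p.1:ℝ)+(p.2:ℝ)),
    mul_nonneg (mul_nonneg (mul_nonneg hx hx) hx) hx,
    mul_nonneg (mul_nonneg (mul_nonneg hy hy) hy) hy]

lemma summable_s32 :
    Summable (fun p : ℕ × ℕ => 1 / (((p.1:ℝ)+(p.2:ℝ)+2)^3 * ((p.1:ℝ)+1)^2)) := by
  refine summable_dom 1 (fun p => by positivity) (fun p => ?_)
  rw [one_mul]
  have hx : (0:ℝ) ≤ (p.1:ℝ) := Nat.cast_nonneg _
  have hy : (0:ℝ) ≤ (p.2:ℝ) := Nat.cast_nonneg _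
  apply one_div_le_one_div_of_le (by positivity)
  nlinarith [mul_nonneg hx hy, mul_nonneg (mul_nonneg hx hy) hy,
    mul_nonneg (mul_nonneg hx hx) hy, mul_nonneg (mul_nonneg hy hy) hy,
    mul_nonneg (mul_nonneg hx hx) hx, mul_nonneg (mul_nonneg hy hy) hx]

lemma summable_s41 :
    Summable (fun p : ℕ × ℕ => 1 / (((p.1:ℝ)+(p.2:ℝ)+2)^4 * ((p.1:ℝ)+1)^1)) := by
  refine summable_dom 1 (fun p => by positivity) (fun p => ?_)
  rw [one_mul]
  have hx : (0:ℝ) ≤ (p.1:ℝ) := Nat.cast_nonneg _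
  have hy : (0:ℝ) ≤ (p.2:ℝ) := Nat.cast_nonneg _
  apply one_div_le_one_div_of_le (by positivity)
  nlinarith [mul_nonneg hx hy, mul_nonneg (mul_nonneg hx hy) hy,
    mul_nonneg (mul_nonneg hx hx) hy, mul_nonneg (mul_nonneg hy hy) hy,
    mul_nonneg (mul_nonneg hx hx) hx, sq_nonneg ((p.1:ℝ)+(p.2:ℝ)),
    mul_nonneg (mul_nonneg (mul_nonneg hx hx) hx) hx,
    mul_nonneg (mul_nonneg (mul_nonneg hy hy) hy) hy,
    mul_nonneg (mul_nonneg (mul_nonneg hx hy) hy) hy,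
    mul_nonneg (mul_nonneg (mul_nonneg hx hx) hy) hy,
    mul_nonneg (mul_nonneg (mul_nonneg hx hx) hx) hy]

lemma summable_w3 :
    Summable (fun p : ℕ × ℕ => 1 / (((p.1:ℝ)+1) * ((p.2:ℝ)+1) * ((p.1:ℝ)+(p.2:ℝ)+2)^3)) := by
  refine summable_dom 1 (fun p => by positivity) (fun p => ?_)
  rw [one_mul]
  have hx : (0:ℝ) ≤ (p.1:ℝ) := Nat.cast_nonneg _
  have hy : (0:ℝ) ≤ (p.2:ℝ) := Nat.cast_nonneg _
  apply one_div_le_one_div_of_le (by positivity)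
  nlinarith [mul_nonneg hx hy, mul_nonneg (mul_nonneg hx hy) hy,
    mul_nonneg (mul_nonneg hx hx) hy, mul_nonneg (mul_nonneg hy hy) hy,
    mul_nonneg (mul_nonneg hx hx) hx]

lemma summable_w2 :
    Summable (fun p : ℕ × ℕ => 1 / (((p.1:ℝ)+1) * ((p.2:ℝ)+1)^2 * ((p.1:ℝ)+(p.2:ℝ)+2)^2)) := by
  refine summable_dom 1 (fun p => by positivity) (fun p => ?_)
  rw [one_mul]
  have hx : (0:ℝ) ≤ (p.1:ℝ) := Nat.cast_nonneg _
  have hy : (0:ℝ) ≤ (p.2:ℝ) := Nat.cast_nonneg _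
  apply one_div_le_one_div_of_le (by positivity)
  nlinarith [mul_nonneg hx hy, mul_nonneg (mul_nonneg hx hy) hy,
    mul_nonneg (mul_nonneg hx hx) hy, mul_nonneg (mul_nonneg hy hy) hy,
    mul_nonneg (mul_nonneg hx hx) hx]

lemma summable_w1 :
    Summable (fun p : ℕ × ℕ => 1 / (((p.1:ℝ)+1) * ((p.2:ℝ)+1)^3 * ((p.1:ℝ)+(p.2:ℝ)+2))) := by
  refine summable_dom 1 (fun p => by positivity) (fun p => ?_)
  rw [one_mul]
  have hx : (0:ℝ) ≤ (p.1:ℝ) := Nat.cast_nonneg _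
  have hy : (0:ℝ) ≤ (p.2:ℝ) := Nat.cast_nonneg _
  apply one_div_le_one_div_of_le (by positivity)
  nlinarith [mul_nonneg hx hy, mul_nonneg (mul_nonneg hx hy) hy,
    mul_nonneg (mul_nonneg hx hx) hy, mul_nonneg (mul_nonneg hy hy) hy,
    mul_nonneg (mul_nonneg hx hx) hx]

lemma summable_prod23 :
    Summable (fun p : ℕ × ℕ => 1 / (((p.1:ℝ)+1)^2 * ((p.2:ℝ)+1)^3)) := by
  refine summable_dom 1 (fun p => by positivity) (fun p => ?_)
  rw [one_mul]
  have hx : (0:ℝ) ≤ (p.1:ℝ) := Nat.cast_nonneg _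
  have hy : (0:ℝ) ≤ (p.2:ℝ) := Nat.cast_nonneg _
  apply one_div_le_one_div_of_le (by positivity)
  nlinarith [mul_nonneg hx hy, mul_nonneg (mul_nonneg hx hy) hy,
    mul_nonneg (mul_nonneg hx hx) hy, mul_nonneg (mul_nonneg hy hy) hy]

lemma summable_G :
    Summable (fun p : ℕ × ℕ =>
      if p.2 ≤ p.1 then 1 / (((p.1:ℝ)+1)^4 * ((p.2:ℝ)+1)) else 0) := by
  refine summable_dom 1 (fun p => by positivity) (fun p => ?_)
  rw [one_mul]
  by_cases h : p.2 ≤ p.1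
  · rw [if_pos h]
    have hx : (0:ℝ) ≤ (p.1:ℝ) := Nat.cast_nonneg _
    have hy : (0:ℝ) ≤ (p.2:ℝ) := Nat.cast_nonneg _
    have hxy : (p.2:ℝ) ≤ (p.1:ℝ) := Nat.cast_le.mpr h
    apply one_div_le_one_div_of_le (by positivity)
    nlinarith [mul_nonneg hx hy, mul_nonneg (mul_nonneg hx hy) hy,
      mul_nonneg (mul_nonneg hx hx) hy, mul_nonneg (mul_nonneg hy hy) hy,
      mul_nonneg (mul_nonneg hx hx) hx,
      mul_nonneg (mul_nonneg (mul_nonneg hx hx) hx) hx]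
  · rw [if_neg h]
    positivity

lemma summable_g :
    Summable (fun p : ℕ × ℕ =>
      if 1 ≤ p.2 ∧ p.2 < p.1 then (1:ℝ) / ((p.1:ℝ)^3 * (p.2:ℝ)^2) else 0) := by
  refine summable_dom 16 (fun p => by positivity) (fun p => ?_)
  by_cases h : 1 ≤ p.2 ∧ p.2 < p.1
  · rw [if_pos h]
    set m := (p.1:ℝ) with hm
    set n := (p.2:ℝ) with hn
    have h1 : (1:ℝ) ≤ n := by
      rw [hn]; exact_mod_cast h.1
    have h2 : n + 1 ≤ m := by
      rw [hm, hn]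
      have : p.2 + 1 ≤ p.1 := h.2
      exact_mod_cast this
    rw [mul_one_div, div_le_div_iff₀
      (mul_pos (pow_pos (by linarith : (0:ℝ) < m) 3) (pow_pos (by linarith : (0:ℝ) < n) 2))
      (by positivity), one_mul]
    have hm1 : 1 ≤ m := by linarith
    have h3 : (m+1)^2 ≤ 4*m^2 := by nlinarith
    have h4 : (n+1)^2 ≤ 4*n^2 := by nlinarith
    have h5 : (m+1)^2*(n+1)^2 ≤ (4*m^2)*(4*n^2) :=
      mul_le_mul h3 h4 (by positivity) (by nlinarith)
    nlinarith [mul_nonneg (mul_nonneg (sq_nonneg m) (sq_nonneg n))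
      (by linarith : (0:ℝ) ≤ m - 1)]
  · rw [if_neg h]
    positivity

end Summabilities


section Equations

lemma s32_eq :
    (∑' p : ℕ × ℕ, 1 / (((p.1:ℝ)+(p.2:ℝ)+2)^3 * ((p.1:ℝ)+1)^2)) = D 3 2 := by
  rw [D, ← (Equiv.prodComm ℕ ℕ).tsum_eq
    (fun p : ℕ × ℕ => 1 / (((p.1:ℝ)+(p.2:ℝ)+2)^3 * ((p.2:ℝ)+1)^2))]
  exact tsum_congr fun p => by simp only [Equiv.prodComm_apply, Prod.fst_swap, Prod.snd_swap]; ring_nf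

lemma s41_eq :
    (∑' p : ℕ × ℕ, 1 / (((p.1:ℝ)+(p.2:ℝ)+2)^4 * ((p.1:ℝ)+1)^1)) = D 4 1 := by
  rw [D, ← (Equiv.prodComm ℕ ℕ).tsum_eq
    (fun p : ℕ × ℕ => 1 / (((p.1:ℝ)+(p.2:ℝ)+2)^4 * ((p.2:ℝ)+1)^1))]
  exact tsum_congr fun p => by simp only [Equiv.prodComm_apply, Prod.fst_swap, Prod.snd_swap]; ring_nf

lemma prod_eq :
    Z 2 * Z 3 = ∑' p : ℕ × ℕ, 1 / (((p.1:ℝ)+1)^2 * ((p.2:ℝ)+1)^3) := by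
  rw [Z, Z, Summable.tsum_mul_tsum (summable_z one_lt_two) (summable_z (by norm_num))
    (summable_prod23.congr fun p => (by rw [div_mul_div_comm, one_mul] :
      (1:ℝ) / ((p.1:ℝ)+1)^2 * (1 / ((p.2:ℝ)+1)^3) = 1 / (((p.1:ℝ)+1)^2 * ((p.2:ℝ)+1)^3)).symm)]
  exact tsum_congr fun p => by rw [div_mul_div_comm, one_mul]

lemma stuffle : Z 2 * Z 3 = D 2 3 + D 3 2 + Z 5 := by
  rw [prod_eq, tsum_split _ summable_prod23]
  congr 1
  congr 1
  · rw [D]; exact tsum_congr fun p => by push_cast; ring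
  · rw [D]; exact tsum_congr fun p => by push_cast; ring
  · rw [Z]; exact tsum_congr fun c => by push_cast; ring

lemma eulerdec : Z 2 * Z 3 = D 2 3 + 3 * D 3 2 + 6 * D 4 1 := by
  rw [prod_eq]
  have hpt : ∀ p : ℕ × ℕ, 1 / (((p.1:ℝ)+1)^2 * ((p.2:ℝ)+1)^3)
      = 1 / (((p.1:ℝ)+(p.2:ℝ)+2)^2 * ((p.2:ℝ)+1)^3)
        + (2 * (1 / (((p.1:ℝ)+(p.2:ℝ)+2)^3 * ((p.2:ℝ)+1)^2))
        + (3 * (1 / (((p.1:ℝ)+(p.2:ℝ)+2)^4 * ((p.2:ℝ)+1)^1))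
        + (1 / (((p.1:ℝ)+(p.2:ℝ)+2)^3 * ((p.1:ℝ)+1)^2)
        + 3 * (1 / (((p.1:ℝ)+(p.2:ℝ)+2)^4 * ((p.1:ℝ)+1)^1))))) := by
    intro p
    have hx : (0:ℝ) < (p.1:ℝ) + 1 := by positivity
    have hy : (0:ℝ) < (p.2:ℝ) + 1 := by positivity
    have hk : (0:ℝ) < (p.1:ℝ) + (p.2:ℝ) + 2 := by positivity
    field_simp
    ring
  rw [tsum_congr hpt,
    Summable.tsum_add summable_d23 (((summable_d32.mul_left 2)).add
      ((summable_d41.mul_left 3).add (summable_s32.add (summable_s41.mul_left 3)))),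
    Summable.tsum_add (summable_d32.mul_left 2)
      ((summable_d41.mul_left 3).add (summable_s32.add (summable_s41.mul_left 3))),
    Summable.tsum_add (summable_d41.mul_left 3) (summable_s32.add (summable_s41.mul_left 3)),
    Summable.tsum_add summable_s32 (summable_s41.mul_left 3),
    tsum_mul_left, tsum_mul_left, tsum_mul_left, s32_eq, s41_eq]
  simp only [D]
  ring

lemma eqA :
    (∑' p : ℕ × ℕ, 1 / (((p.1:ℝ)+1) * ((p.2:ℝ)+1) * ((p.1:ℝ)+(p.2:ℝ)+2)^3))
      = 2 * D 4 1 := by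
  have hpt : ∀ p : ℕ × ℕ, 1 / (((p.1:ℝ)+1) * ((p.2:ℝ)+1) * ((p.1:ℝ)+(p.2:ℝ)+2)^3)
      = 1 / (((p.1:ℝ)+(p.2:ℝ)+2)^4 * ((p.2:ℝ)+1)^1)
        + 1 / (((p.1:ℝ)+(p.2:ℝ)+2)^4 * ((p.1:ℝ)+1)^1) := by
    intro p
    have hx : (0:ℝ) < (p.1:ℝ) + 1 := by positivity
    have hy : (0:ℝ) < (p.2:ℝ) + 1 := by positivity
    have hk : (0:ℝ) < (p.1:ℝ) + (p.2:ℝ) + 2 := by positivity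
    field_simp
    ring
  rw [tsum_congr hpt, Summable.tsum_add summable_d41 summable_s41, s41_eq]
  simp only [D]
  ring

lemma eqB :
    (∑' p : ℕ × ℕ, 1 / (((p.1:ℝ)+1) * ((p.2:ℝ)+1) * ((p.1:ℝ)+(p.2:ℝ)+2)^3))
      + D 3 2 + D 2 3
      = ∑' p : ℕ × ℕ, 1 / (((p.1:ℝ)+1) * ((p.2:ℝ)+1)^3 * ((p.1:ℝ)+(p.2:ℝ)+2)) := by
  have hpt : ∀ p : ℕ × ℕ,
      1 / (((p.1:ℝ)+1) * ((p.2:ℝ)+1) * ((p.1:ℝ)+(p.2:ℝ)+2)^3)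
        + (1 / (((p.1:ℝ)+(p.2:ℝ)+2)^3 * ((p.2:ℝ)+1)^2)
        + 1 / (((p.1:ℝ)+(p.2:ℝ)+2)^2 * ((p.2:ℝ)+1)^3))
      = 1 / (((p.1:ℝ)+1) * ((p.2:ℝ)+1)^3 * ((p.1:ℝ)+(p.2:ℝ)+2)) := by
    intro p
    have hx : (0:ℝ) < (p.1:ℝ) + 1 := by positivity
    have hy : (0:ℝ) < (p.2:ℝ) + 1 := by positivity
    have hk : (0:ℝ) < (p.1:ℝ) + (p.2:ℝ) + 2 := by positivity
    field_simp
    ring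
  rw [← tsum_congr hpt, Summable.tsum_add summable_w3 (summable_d32.add summable_d23),
    Summable.tsum_add summable_d32 summable_d23]
  simp only [D]
  ring


lemma hinner (j : ℕ) :
    (∑' i : ℕ, 1 / (((i:ℝ)+1) * ((j:ℝ)+1)^3 * ((i:ℝ)+(j:ℝ)+2)))
      = ∑' k : ℕ, (if k ≤ j then 1 / (((j:ℝ)+1)^4 * ((k:ℝ)+1)) else 0) := by
  have htel := (hasSum_tele (j+1)).mul_left (1 / ((j:ℝ)+1)^4)
  have heq : (fun m : ℕ => 1 / ((j:ℝ)+1)^4 * (1/((m:ℝ)+1) - 1/((m:ℝ)+((j+1:ℕ):ℝ)+1)))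
      = fun i : ℕ => 1 / (((i:ℝ)+1) * ((j:ℝ)+1)^3 * ((i:ℝ)+(j:ℝ)+2)) := by
    funext i
    have h1 : (0:ℝ) < (i:ℝ)+1 := by positivity
    have h2 : (0:ℝ) < (j:ℝ)+1 := by positivity
    have h3 : (0:ℝ) < (i:ℝ)+(j:ℝ)+2 := by positivity
    push_cast
    field_simp
    ring
  rw [heq] at htel
  rw [htel.tsum_eq, tsum_eq_sum (s := Finset.range (j+1))
    (f := fun k : ℕ => if k ≤ j then 1 / (((j:ℝ)+1)^4 * ((k:ℝ)+1)) else 0)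
    (fun k hk => by
      simp only [Finset.mem_range, not_lt] at hk
      exact if_neg (by omega)),
    Finset.mul_sum]
  refine Finset.sum_congr rfl fun k hk => ?_
  simp only [Finset.mem_range] at hk
  rw [if_pos (by omega)]
  field_simp

lemma eqC :
    (∑' p : ℕ × ℕ, 1 / (((p.1:ℝ)+1) * ((p.2:ℝ)+1)^3 * ((p.1:ℝ)+(p.2:ℝ)+2)))
      = D 4 1 + Z 5 := by
  have hswap : Summable (fun q : ℕ × ℕ =>
      1 / (((q.2:ℝ)+1) * ((q.1:ℝ)+1)^3 * ((q.2:ℝ)+(q.1:ℝ)+2))) := by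
    have h := (Equiv.prodComm ℕ ℕ).summable_iff.mpr summable_w1
    refine h.congr fun q => ?_
    simp only [Function.comp, Equiv.prodComm_apply, Prod.fst_swap, Prod.snd_swap]
  have h1 : (∑' p : ℕ × ℕ, 1 / (((p.1:ℝ)+1) * ((p.2:ℝ)+1)^3 * ((p.1:ℝ)+(p.2:ℝ)+2)))
      = ∑' q : ℕ × ℕ, 1 / (((q.2:ℝ)+1) * ((q.1:ℝ)+1)^3 * ((q.2:ℝ)+(q.1:ℝ)+2)) := by
    rw [← (Equiv.prodComm ℕ ℕ).tsum_eq
      (fun p : ℕ × ℕ => 1 / (((p.1:ℝ)+1) * ((p.2:ℝ)+1)^3 * ((p.1:ℝ)+(p.2:ℝ)+2)))]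
    exact tsum_congr fun q => by
      simp only [Equiv.prodComm_apply, Prod.fst_swap, Prod.snd_swap]
  have h2 : (∑' q : ℕ × ℕ, 1 / (((q.2:ℝ)+1) * ((q.1:ℝ)+1)^3 * ((q.2:ℝ)+(q.1:ℝ)+2)))
      = ∑' j : ℕ, ∑' i : ℕ, 1 / (((i:ℝ)+1) * ((j:ℝ)+1)^3 * ((i:ℝ)+(j:ℝ)+2)) :=
    Summable.tsum_prod' hswap (fun j => hswap.prod_factor j)
  have h3 : (∑' j : ℕ, ∑' i : ℕ, 1 / (((i:ℝ)+1) * ((j:ℝ)+1)^3 * ((i:ℝ)+(j:ℝ)+2)))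
      = ∑' j : ℕ, ∑' k : ℕ, (if k ≤ j then 1 / (((j:ℝ)+1)^4 * ((k:ℝ)+1)) else 0) :=
    tsum_congr fun j => hinner j
  have h4 : (∑' j : ℕ, ∑' k : ℕ, (if k ≤ j then 1 / (((j:ℝ)+1)^4 * ((k:ℝ)+1)) else 0))
      = ∑' q : ℕ × ℕ, (if q.2 ≤ q.1 then 1 / (((q.1:ℝ)+1)^4 * ((q.2:ℝ)+1)) else 0) :=
    (Summable.tsum_prod' summable_G (fun b => summable_G.prod_factor b)).symm
  rw [h1, h2, h3, h4, tsum_split _ summable_G]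
  have e1 : (∑' p : ℕ × ℕ, (if (p.1+p.2+1, p.2).2 ≤ (p.1+p.2+1, p.2).1
      then 1 / ((((p.1+p.2+1, p.2).1:ℝ)+1)^4 * (((p.1+p.2+1, p.2).2:ℝ)+1)) else 0)) = D 4 1 := by
    simp only [D]
    refine tsum_congr fun p => ?_
    rw [if_pos (by omega : (p.1+p.2+1, p.2).2 ≤ (p.1+p.2+1, p.2).1)]
    push_cast
    ring
  have e2 : (∑' p : ℕ × ℕ, (if (p.2, p.1+p.2+1).2 ≤ (p.2, p.1+p.2+1).1
      then 1 / ((((p.2, p.1+p.2+1).1:ℝ)+1)^4 * (((p.2, p.1+p.2+1).2:ℝ)+1)) else 0)) = 0 := by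
    have hz : ∀ p : ℕ × ℕ, (if (p.2, p.1+p.2+1).2 ≤ (p.2, p.1+p.2+1).1
        then 1 / (((((p.2, p.1+p.2+1).1:ℕ):ℝ)+1)^4 * ((((p.2, p.1+p.2+1).2:ℕ):ℝ)+1)) else 0) = 0 :=
      fun p => if_neg (by omega)
    rw [tsum_congr hz, tsum_zero]
  have e3 : (∑' c : ℕ, (if (c, c).2 ≤ (c, c).1
      then 1 / ((((c, c).1:ℝ)+1)^4 * (((c, c).2:ℝ)+1)) else 0)) = Z 5 := by
    simp only [Z]
    refine tsum_congr fun c => ?_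
    rw [if_pos (by omega : (c, c).2 ≤ (c, c).1)]
    push_cast
    ring
  rw [e1, e2, e3]
  ring

lemma lhs_eq :
    (∑' m : ℕ, ∑' n : ℕ, (if 1 ≤ n ∧ n < m then (1 : ℝ) / ((m : ℝ) ^ 3 * (n : ℝ) ^ 2) else 0))
      = D 3 2 := by
  have hrow : ∀ m : ℕ, Summable (fun n : ℕ =>
      if 1 ≤ n ∧ n < m then (1:ℝ) / ((m:ℝ)^3 * (n:ℝ)^2) else 0) := by
    intro m
    apply summable_of_ne_finset_zero (s := Finset.range m)
    intro n hn
    simp only [Finset.mem_range, not_lt] at hn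
    rw [if_neg (by omega)]
  have h2 : (∑' m : ℕ, ∑' n : ℕ, (if 1 ≤ n ∧ n < m then (1 : ℝ) / ((m : ℝ) ^ 3 * (n : ℝ) ^ 2) else 0))
      = ∑' p : ℕ × ℕ, (if 1 ≤ p.2 ∧ p.2 < p.1 then (1:ℝ) / ((p.1:ℝ)^3 * (p.2:ℝ)^2) else 0) :=
    (Summable.tsum_prod' summable_g hrow).symm
  rw [h2]
  have hinj : Function.Injective (fun p : ℕ × ℕ => ((p.1+p.2+2, p.2+1) : ℕ × ℕ)) := by
    intro a b hab
    have h1 := congrArg Prod.fst hab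
    have h2 := congrArg Prod.snd hab
    simp only at h1 h2
    exact Prod.ext (by omega) (by omega)
  have hsupp : Function.support (fun p : ℕ × ℕ =>
        (if 1 ≤ p.2 ∧ p.2 < p.1 then (1:ℝ) / ((p.1:ℝ)^3 * (p.2:ℝ)^2) else 0))
      ⊆ Set.range (fun p : ℕ × ℕ => ((p.1+p.2+2, p.2+1) : ℕ × ℕ)) := by
    intro q hq
    have hcond : 1 ≤ q.2 ∧ q.2 < q.1 := by
      by_contra h
      simp only [Function.mem_support] at hq
      exact hq (if_neg h)
    exact ⟨(q.1 - q.2 - 1, q.2 - 1), Prod.ext (by simp; omega) (by simp; omega)⟩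
  rw [← hinj.tsum_eq hsupp]
  simp only [D]
  refine tsum_congr fun p => ?_
  rw [if_pos ⟨by omega, by omega⟩]
  push_cast
  ring

end Equations

end DoubleZeta

/-- The double zeta value ζ(3,2) = Σ_{m>n≥1} 1/(m³ n²) equals 3·ζ(2)·ζ(3) − (11/2)·ζ(5). -/
theorem double_zeta_three_two :
    (∑' m : ℕ, ∑' n : ℕ, (if 1 ≤ n ∧ n < m then (1 : ℝ) / ((m : ℝ) ^ 3 * (n : ℝ) ^ 2) else 0))
      = 3 * (∑' n : ℕ, (1 : ℝ) / ((n : ℝ) + 1) ^ 2) * (∑' n : ℕ, (1 : ℝ) / ((n : ℝ) + 1) ^ 3)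
        - (11 / 2) * ∑' n : ℕ, (1 : ℝ) / ((n : ℝ) + 1) ^ 5 := by
  rw [DoubleZeta.lhs_eq]
  show DoubleZeta.D 3 2 = 3 * DoubleZeta.Z 2 * DoubleZeta.Z 3 - (11 / 2) * DoubleZeta.Z 5
  have h1 := DoubleZeta.stuffle
  have h2 := DoubleZeta.eulerdec
  have h3 := DoubleZeta.eqA
  have h4 := DoubleZeta.eqB
  have h5 := DoubleZeta.eqC
  have hmul : 3 * DoubleZeta.Z 2 * DoubleZeta.Z 3
      = 3 * (DoubleZeta.Z 2 * DoubleZeta.Z 3) := by ring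
  rw [hmul]
  linarith
end
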